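/- arXiv:2102.12242 — 2 statements merged into one kernel-verified Lean document; each statement's English description precedes it below -/
import Mathlib

section
/- Let x and y be two Hamiltonian cycles on vertex set V whose union multigraph x ∪ y admits a Hamiltonian decomposition into cycles z and w with {z, w} ≠ {x, y}. Then the characteristic vectors x^v and y^v are not adjacent vertices of the traveling salesperson polytope TSP(n), i.e., the segment [x^v, y^v] is not a one-dimensional face of TSP(n). -/
variable {V : Type*} [Fintype V] [DecidableEq V]

/-- The edge set of a Hamiltonian cycle on `V`: a loopless, 2-regular, connected
spanning (sub)graph of the complete graph on `V`. -/
def IsHamiltonianCycleSet (E : Finset (Sym2 V)) : Prop :=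
  (∀ e ∈ E, ¬ e.IsDiag) ∧
  (∀ v : V, (E.filter (fun e => v ∈ e)).card = 2) ∧
  (SimpleGraph.fromEdgeSet (E : Set (Sym2 V))).Connected

/-- The characteristic vector of an edge set. -/
def charVec (E : Finset (Sym2 V)) : Sym2 V → ℝ :=
  fun e => if e ∈ E then 1 else 0

/-- The symmetric traveling salesperson polytope on the vertex set `V`. -/
def tspPolytope (V : Type*) [Fintype V] [DecidableEq V] : Set (Sym2 V → ℝ) :=
  convexHull ℝ {χ | ∃ E : Finset (Sym2 V), IsHamiltonianCycleSet E ∧ χ = charVec E}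

lemma charVec_inj {E F : Finset (Sym2 V)} (h : charVec E = charVec F) : E = F := by
  ext e
  have := congrFun h e
  simp only [charVec] at this
  by_cases hE : e ∈ E <;> by_cases hF : e ∈ F <;> simp_all

lemma charVec_count (E : Finset (Sym2 V)) (e : Sym2 V) :
    charVec E e = (E.val.count e : ℝ) := by
  by_cases hE : e ∈ E
  · simp [charVec, hE, Multiset.count_eq_one_of_mem E.nodup hE]
  · simp [charVec, hE, Multiset.count_eq_zero_of_notMem hE]

lemma charVec_add {E F X Y : Finset (Sym2 V)} (h : E.val + F.val = X.val + Y.val) :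
    charVec E + charVec F = charVec X + charVec Y := by
  funext e
  have hc : (E.val + F.val).count e = (X.val + Y.val).count e := by rw [h]
  simp only [Multiset.count_add] at hc
  simp only [Pi.add_apply, charVec_count]
  exact_mod_cast hc

lemma seg_mem {x y z : Finset (Sym2 V)}
    (h : charVec z ∈ segment ℝ (charVec x) (charVec y)) : z = x ∨ z = y := by
  obtain ⟨a, b, ha, hb, hab, hsum⟩ := h
  rcases eq_or_lt_of_le ha with ha0 | ha0
  · right
    apply charVec_inj
    have hb1 : b = 1 := by linarith
    rw [← hsum, ← ha0, hb1]; simp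
  rcases eq_or_lt_of_le hb with hb0 | hb0
  · left
    apply charVec_inj
    have ha1 : a = 1 := by linarith
    rw [← hsum, ← hb0, ha1]; simp
  -- 0 < a, 0 < b : show x = y
  have hxy : x = y := by
    ext e
    have he := congrFun hsum e
    simp only [Pi.add_apply, Pi.smul_apply, smul_eq_mul, charVec] at he
    by_cases hex : e ∈ x <;> by_cases hey : e ∈ y <;>
      simp [hex, hey] at he ⊢ <;>
      split_ifs at he <;> linarith
  left
  apply charVec_inj
  rw [← hsum, ← hxy]
  funext e
  simp only [Pi.add_apply, Pi.smul_apply, smul_eq_mul]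
  rw [← add_mul, hab, one_mul]


/-- if `x ∪ y` has a Hamiltonian decomposition `z, w` with
`{z,w} ≠ {x,y}`, then the segment `[x^v, y^v]` is not a face of `TSP(n)`
(the set of maximizers of no linear functional equals this segment), i.e.
`x^v` and `y^v` are nonadjacent. -/
theorem stmt1 (x y z w : Finset (Sym2 V))
    (hx : IsHamiltonianCycleSet x) (hy : IsHamiltonianCycleSet y)
    (hz : IsHamiltonianCycleSet z) (hw : IsHamiltonianCycleSet w)
    (hdecomp : z.val + w.val = x.val + y.val)
    (hne : ¬ ((z = x ∧ w = y) ∨ (z = y ∧ w = x))) :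
    ¬ ∃ f : (Sym2 V → ℝ) →ₗ[ℝ] ℝ,
      {p ∈ tspPolytope V | ∀ q ∈ tspPolytope V, f q ≤ f p}
        = segment ℝ (charVec x) (charVec y) := by
  rintro ⟨f, hf⟩
  have hmemx : charVec x ∈ segment ℝ (charVec x) (charVec y) := left_mem_segment ℝ _ _
  have hmemy : charVec y ∈ segment ℝ (charVec x) (charVec y) := right_mem_segment ℝ _ _
  rw [← hf] at hmemx hmemy
  obtain ⟨hxP, hxM⟩ := hmemx
  obtain ⟨hyP, hyM⟩ := hmemy
  have hzP : charVec z ∈ tspPolytope V :=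
    subset_convexHull ℝ _ ⟨z, hz, rfl⟩
  have hwP : charVec w ∈ tspPolytope V :=
    subset_convexHull ℝ _ ⟨w, hw, rfl⟩
  have hfxy : f (charVec x) = f (charVec y) :=
    le_antisymm (hyM _ hxP) (hxM _ hyP)
  have hsum : f (charVec z) + f (charVec w) = f (charVec x) + f (charVec y) := by
    rw [← map_add, ← map_add, charVec_add hdecomp]
  have hzle : f (charVec z) ≤ f (charVec x) := hxM _ hzP
  have hwle : f (charVec w) ≤ f (charVec x) := hxM _ hwP
  have hzeq : f (charVec z) = f (charVec x) := by linarith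
  have hweq : f (charVec w) = f (charVec x) := by linarith
  have hzseg : charVec z ∈ segment ℝ (charVec x) (charVec y) := by
    rw [← hf]
    exact ⟨hzP, fun q hq => hzeq ▸ hxM q hq⟩
  have hwseg : charVec w ∈ segment ℝ (charVec x) (charVec y) := by
    rw [← hf]
    exact ⟨hwP, fun q hq => hweq ▸ hxM q hq⟩
  rcases seg_mem hzseg with hz1 | hz1 <;> rcases seg_mem hwseg with hw1 | hw1
  · have hxyv : x.val = y.val := by
      rw [hz1, hw1] at hdecomp
      exact add_left_cancel hdecomp
    exact hne (Or.inl ⟨hz1, hw1.trans (Finset.val_injective hxyv)⟩)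
  · exact hne (Or.inl ⟨hz1, hw1⟩)
  · exact hne (Or.inr ⟨hz1, hw1⟩)
  · have hxyv : y.val = x.val := by
      rw [hz1, hw1] at hdecomp
      exact add_right_cancel hdecomp
    exact hne (Or.inr ⟨hz1, hw1.trans (Finset.val_injective hxyv)⟩)
end

section
/- If the open segment between two vertices u and v of a polytope P intersects the open segment between two other vertices z and w of P (with {z, w} ≠ {u, v}), then u and v are not adjacent in the 1-skeleton of P. -/
/-!
The maximizers of a linear functional form an exposed, hence extreme, subset of `P`. So if
`[u, v]` is such a face and contains a point `x` of the open segment `(z, w)`, then `z` and `w`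
lie in `[u, v]`, and as extreme points of `P` they must be endpoints of it. The case `z = w` is
excluded too: then `x = z` is an extreme point of `P` inside the open segment `(u, v)`.
-/

open Set

section

variable {𝕜 E : Type*} [Ring 𝕜] [LinearOrder 𝕜] [IsStrictOrderedRing 𝕜] [DenselyOrdered 𝕜]
  [AddCommGroup E] [Module 𝕜 E] [Module.IsTorsionFree 𝕜 E] {A : Set E} {u v z w : E}

theorem IsExtreme.eq_endpoints_of_openSegment_meet (hext : IsExtreme 𝕜 A (segment 𝕜 u v))
    (hz : z ∈ A.extremePoints 𝕜) (hw : w ∈ A.extremePoints 𝕜)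
    (hmeet : (openSegment 𝕜 u v ∩ openSegment 𝕜 z w).Nonempty) :
    (z = u ∧ w = v) ∨ (z = v ∧ w = u) := by
  obtain ⟨x, hxuv, hxzw⟩ := hmeet
  have hu : u ∈ A := hext.subset (left_mem_segment 𝕜 u v)
  have hv : v ∈ A := hext.subset (right_mem_segment 𝕜 u v)
  have hxseg := openSegment_subset_segment 𝕜 u v hxuv
  have hzuv := hext.left_mem_of_mem_openSegment hz.1 hw.1 hxseg hxzw
  have hwuv := hext.right_mem_of_mem_openSegment hz.1 hw.1 hxseg hxzw
  by_cases hzw : z = w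
  · subst hzw
    rw [openSegment_same, mem_singleton_iff] at hxzw
    subst hxzw
    obtain rfl := hz.2 hu hv hxuv
    exact Or.inl ⟨rfl, left_mem_openSegment_iff.1 hxuv⟩
  have hz' := (mem_extremePoints_iff_forall_segment.1 hz).2 u hu v hv hzuv
  have hw' := (mem_extremePoints_iff_forall_segment.1 hw).2 u hu v hv hwuv
  rcases hz' with rfl | rfl <;> rcases hw' with rfl | rfl <;> tauto

end

theorem stmt2_general {d : ℕ}
    (P : Set (Fin d → ℝ))
    (u v z w : Fin d → ℝ)
    (hz : z ∈ P.extremePoints ℝ) (hw : w ∈ P.extremePoints ℝ)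
    (hne : ¬ ((z = u ∧ w = v) ∨ (z = v ∧ w = u)))
    (hmeet : (openSegment ℝ u v ∩ openSegment ℝ z w).Nonempty) :
    ¬ ∃ f : (Fin d → ℝ) →ₗ[ℝ] ℝ,
      {p ∈ P | ∀ q ∈ P, f q ≤ f p} = segment ℝ u v := by
  rintro ⟨f, hf⟩
  have hexposed : IsExposed ℝ P (segment ℝ u v) :=
    hf ▸ ContinuousLinearMap.toExposed.isExposed (l := LinearMap.toContinuousLinearMap f)
  exact hne (hexposed.isExtreme.eq_endpoints_of_openSegment_meet hz hw hmeet)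

/-- if the open segment between vertices `u, v` of a polytope `P`
meets the open segment between two other vertices `z, w`, then `[u,v]` is not a
face of `P`, i.e. `u` and `v` are not adjacent in the 1-skeleton. -/
theorem stmt2 {d : ℕ} (S : Set (Fin d → ℝ)) (hS : S.Finite)
    (P : Set (Fin d → ℝ)) (hP : P = convexHull ℝ S)
    (u v z w : Fin d → ℝ)
    (hu : u ∈ P.extremePoints ℝ) (hv : v ∈ P.extremePoints ℝ)
    (hz : z ∈ P.extremePoints ℝ) (hw : w ∈ P.extremePoints ℝ)
    (hne : ¬ ((z = u ∧ w = v) ∨ (z = v ∧ w = u)))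
    (hmeet : (openSegment ℝ u v ∩ openSegment ℝ z w).Nonempty) :
    ¬ ∃ f : (Fin d → ℝ) →ₗ[ℝ] ℝ,
      {p ∈ P | ∀ q ∈ P, f q ≤ f p} = segment ℝ u v :=
  stmt2_general P u v z w hz hw hne hmeet
end
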